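/- Let w be a word of prime length n that is not a power of a single letter. Then there is exactly one index i in 1..n such that R_i(w) is a Lyndon word. -/

import Mathlib

def IsLyndon {α : Type*} [LinearOrder α] (w : List α) : Prop :=
  w ≠ [] ∧ ∀ j, 0 < j → j < w.length → List.Lex (· < ·) w (w.rotate j)

/-!
A word `w` of prime length `p` that is not a power of a letter differs from all its nontrivial
rotations: a period `j` with `0 < j < p` is coprime to `p`, so together with the period `p` it
forces the period `1`. Hence the rotation of `w` that is minimal among all of them is strictly
smaller than the others, i.e. it is a Lyndon word. Conversely, two distinct rotations of `w` are
nontrivial rotations of each other, so they cannot both be Lyndon words.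
-/

namespace List

variable {α : Type*}

theorem rotate_one_iterate (l : List α) (k : ℕ) :
    (fun l : List α ↦ l.rotate 1)^[k] l = l.rotate k := by
  induction k with
  | zero => simp
  | succ k ih => rw [Function.iterate_succ_apply', ih, rotate_rotate]

theorem rotate_one_eq_self_of_coprime {l : List α} {j : ℕ} (hj : j.Coprime l.length)
    (h : l.rotate j = l) : l.rotate 1 = l := by
  have hper : Function.IsPeriodicPt (fun l : List α ↦ l.rotate 1) j l := by
    rw [Function.IsPeriodicPt, Function.IsFixedPt, rotate_one_iterate, h]
  have hlen : Function.IsPeriodicPt (fun l : List α ↦ l.rotate 1) l.length l := by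
    rw [Function.IsPeriodicPt, Function.IsFixedPt, rotate_one_iterate, rotate_length]
  have h1 := hper.gcd hlen
  rwa [Nat.Coprime.gcd_eq_one hj, Function.IsPeriodicPt, Function.IsFixedPt,
    rotate_one_iterate] at h1

theorem eq_replicate_of_rotate_eq_self_of_prime {l : List α} (hp : l.length.Prime) {j : ℕ}
    (hj0 : 0 < j) (hjl : j < l.length) (h : l.rotate j = l) :
    ∃ a, l = replicate l.length a := by
  obtain ⟨a, -⟩ := exists_mem_of_length_pos hp.pos
  have : Nonempty α := ⟨a⟩
  have hcop : j.Coprime l.length :=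
    ((Nat.Prime.coprime_iff_not_dvd hp).mpr (Nat.not_dvd_of_pos_of_lt hj0 hjl)).symm
  exact rotate_one_eq_self_iff_eq_replicate.mp (rotate_one_eq_self_of_coprime hcop h)

theorem exists_rotate_rotate_eq {l : List α} {i k : ℕ} (hi : i < l.length) (hk : k < l.length)
    (hik : i ≠ k) : ∃ j, 0 < j ∧ j < l.length ∧ (l.rotate i).rotate j = l.rotate k := by
  rcases lt_or_gt_of_ne hik with h | h
  · exact ⟨k - i, by omega, by omega, by rw [rotate_rotate, Nat.add_sub_cancel' h.le]⟩
  · refine ⟨l.length - i + k, by omega, by omega, ?_⟩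
    rw [rotate_rotate, ← rotate_mod, show i + (l.length - i + k) = k + l.length by omega,
      Nat.add_mod_right, Nat.mod_eq_of_lt hk]

end List

section Lyndon

open List

variable {α : Type*} [LinearOrder α]

theorem IsLyndon.lt_rotate {u : List α} (hu : IsLyndon u) {j : ℕ} (hj0 : 0 < j)
    (hju : j < u.length) : u < u.rotate j :=
  hu.2 j hj0 hju

theorem eq_of_isLyndon_rotate {l : List α} {i k : ℕ} (hi : i < l.length) (hk : k < l.length)
    (hLi : IsLyndon (l.rotate i)) (hLk : IsLyndon (l.rotate k)) : i = k := by
  by_contra hik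
  obtain ⟨j, hj0, hjl, hj⟩ := exists_rotate_rotate_eq hi hk hik
  obtain ⟨j', hj'0, hj'l, hj'⟩ := exists_rotate_rotate_eq hk hi (Ne.symm hik)
  have hlt : l.rotate i < l.rotate k := hj ▸ hLi.lt_rotate hj0 (by rwa [length_rotate])
  have hgt : l.rotate k < l.rotate i := hj' ▸ hLk.lt_rotate hj'0 (by rwa [length_rotate])
  exact hlt.asymm hgt

theorem isLyndon_rotate_of_forall_le {l : List α} (hl : l ≠ [])
    (hprim : ∀ j, 0 < j → j < l.length → l.rotate j ≠ l) {i : ℕ}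
    (hmin : ∀ k < l.length, l.rotate i ≤ l.rotate k) : IsLyndon (l.rotate i) := by
  refine ⟨by rwa [Ne, rotate_eq_nil_iff], fun j hj0 hjl => ?_⟩
  rw [length_rotate] at hjl
  change l.rotate i < (l.rotate i).rotate j
  refine lt_of_le_of_ne ?_ fun h => hprim j hj0 hjl ?_
  · rw [rotate_rotate, ← rotate_mod l (i + j)]
    exact hmin _ (Nat.mod_lt _ (length_pos_iff.mpr hl))
  · -- rotations commute and `rotate i` is injective
    rwa [rotate_rotate, add_comm, ← rotate_rotate, eq_comm, rotate_eq_rotate] at h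

end Lyndon

/-- A word of prime length that is not a power of a single letter has
exactly one rotation index yielding a Lyndon word. -/
theorem existsUnique_lyndon_rotation {α : Type*} [LinearOrder α]
    (w : List α) (n : ℕ) (hn : w.length = n) (hp : n.Prime)
    (hconst : ¬ ∃ a : α, w = List.replicate n a) :
    ∃! i : ℕ, i < n ∧ IsLyndon (w.rotate i) := by
  subst hn
  have hw : w ≠ [] := by
    rintro rfl
    exact Nat.not_prime_zero hp
  have hprim : ∀ j, 0 < j → j < w.length → w.rotate j ≠ w := fun j hj0 hjw h =>
    hconst (List.eq_replicate_of_rotate_eq_self_of_prime hp hj0 hjw h)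
  obtain ⟨i, hi, hmin⟩ := (Finset.range w.length).exists_min_image w.rotate
    (Finset.nonempty_range_iff.mpr (List.length_pos_iff.mpr hw).ne')
  rw [Finset.mem_range] at hi
  have hLi : IsLyndon (w.rotate i) :=
    isLyndon_rotate_of_forall_le hw hprim fun k hk => hmin k (Finset.mem_range.mpr hk)
  exact ⟨i, ⟨hi, hLi⟩, fun k ⟨hk, hLk⟩ => eq_of_isLyndon_rotate hk hi hLk hLi⟩
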